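/- Let (g_n)_{n≥1} be a sequence in L¹[0,1] with ‖g_n‖₁ = 1 for all n and pairwise disjoint supports. For t ∈ (1,2), let C_t := { s₁(t−1)g₁ + Σ_{n≥2} s_n g_n : s_n ≥ 0 for all n, Σ_{n≥1} s_n = 1 } and define T : C_t → C_t by T( s₁(t−1)g₁ + Σ_{n≥2} s_n g_n ) = Σ_{n≥1} s_n g_{n+1}. Then for all f, g ∈ C_t and all n ∈ ℕ, ‖Tⁿf − Tⁿg‖₁ ≤ (2/t)·‖f − g‖₁; moreover, for f = (t−1)g₁ and g = g₂ one has ‖f − g‖₁ = t and ‖Tⁿf − Tⁿg‖₁ = 2 = (2/t)·‖f − g‖₁ for all n ≥ 1, so that the uniform Lipschitz constant 2/t is attained and S(T) := liminf_n (|T| + |T²| + ⋯ + |Tⁿ|)/n = 2/t, where |Tᵏ| denotes the exact Lipschitz constant of Tᵏ on C_t. -/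

import Mathlib

open MeasureTheory Filter Topology

/-- Lebesgue measure on `[0,1]`. -/
noncomputable def μ01 : Measure ℝ := volume.restrict (Set.Icc 0 1)

instance : IsFiniteMeasure μ01 := by
  constructor
  simp [μ01, Real.volume_Icc]

/-- The set `C_t = { s₁(t-1)g₁ + Σ_{n≥2} s_n g_n : s_n ≥ 0, Σ s_n = 1 }` (here the sequence
`g` is indexed from `0`, so `g 0` plays the role of `g₁`). -/
noncomputable def Ct (g : ℕ → Lp ℝ 1 μ01) (t : ℝ) : Set (Lp ℝ 1 μ01) :=
  {f | ∃ s : ℕ → ℝ, (∀ n, 0 ≤ s n) ∧ (∑' n, s n) = 1 ∧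
    f = ((t - 1) * s 0) • g 0 + ∑' n : ℕ, s (n + 1) • g (n + 1)}

/-- The exact Lipschitz constant of `T^[k]` on `C_t`. -/
noncomputable def exactLip (g : ℕ → Lp ℝ 1 μ01) (t : ℝ)
    (T : Lp ℝ 1 μ01 → Lp ℝ 1 μ01) (k : ℕ) : ℝ :=
  sSup {q : ℝ | ∃ f ∈ Ct g t, ∃ h ∈ Ct g t, f ≠ h ∧ q = ‖T^[k] f - T^[k] h‖ / ‖f - h‖}

/-!
Disjointness of the supports makes the `L¹` norm on `C_t` an `ℓ¹` norm on coefficients. If `f, h ∈ C_t`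
have coefficient sequences `s, r` and `δ = s - r`, then `‖f - h‖ = (t - 1)|δ₀| + Σ_{n≥1} |δₙ|`, while for
`n ≥ 1` the iterates are `Tⁿf = Σₘ sₘ g_{m+n}`, so `‖Tⁿf - Tⁿh‖ = |δ₀| + Σ_{n≥1} |δₙ|`. Since `Σ δₙ = 0`,
`|δ₀| ≤ Σ_{n≥1} |δₙ|`, and for `t ≤ 2` this gives the ratio bound `2/t`, with equality when
`|δ₀| = Σ_{n≥1} |δₙ|`, e.g. for `f = (t - 1) • g 0` and `h = g 1`. Hence every `|Tᵏ|`, `k ≥ 1`, equals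
`2/t`, and so do their Cesàro means.
-/

lemma summable_of_tsum_ne_zero {ι α : Type*} [AddCommMonoid α] [TopologicalSpace α]
    {f : ι → α} (h : ∑' i, f i ≠ 0) : Summable f := by
  by_contra hf
  exact h (tsum_eq_zero_of_not_summable hf)

lemma summable_smul_of_norm_eq_one {ι E : Type*} [NormedAddCommGroup E] [NormedSpace ℝ E]
    [CompleteSpace E] {G : ι → E} (hG : ∀ i, ‖G i‖ = 1) {a : ι → ℝ} (ha : Summable a) :
    Summable fun i => a i • G i :=
  Summable.of_norm (by simpa [norm_smul, hG] using ha.abs)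

lemma tsum_smul_sub_tsum_smul {ι E : Type*} [NormedAddCommGroup E] [NormedSpace ℝ E]
    [CompleteSpace E] {G : ι → E} (hG : ∀ i, ‖G i‖ = 1) {a b : ι → ℝ} (ha : Summable a)
    (hb : Summable b) : ∑' i, a i • G i - ∑' i, b i • G i = ∑' i, (a - b) i • G i := by
  rw [← (summable_smul_of_norm_eq_one hG ha).tsum_sub (summable_smul_of_norm_eq_one hG hb)]
  simp only [Pi.sub_apply, sub_smul]

def natCons (a : ℝ) (b : ℕ → ℝ) : ℕ → ℝ := fun n => Nat.casesOn n a b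

@[simp] lemma natCons_zero (a : ℝ) (b : ℕ → ℝ) : natCons a b 0 = a := rfl

@[simp] lemma natCons_succ (a : ℝ) (b : ℕ → ℝ) (n : ℕ) : natCons a b (n + 1) = b n := rfl

lemma summable_natCons {b : ℕ → ℝ} (hb : Summable b) (a : ℝ) : Summable (natCons a b) :=
  (summable_nat_add_iff 1).1 hb

lemma tsum_natCons {b : ℕ → ℝ} (hb : Summable b) (a : ℝ) :
    ∑' n, natCons a b n = a + ∑' n, b n :=
  (summable_natCons hb a).tsum_eq_zero_add

lemma tsum_natCons_smul {E : Type*} [NormedAddCommGroup E] [NormedSpace ℝ E] [CompleteSpace E]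
    {G : ℕ → E} (hG : ∀ n, ‖G n‖ = 1) {b : ℕ → ℝ} (hb : Summable b) (a : ℝ) :
    ∑' n, natCons a b n • G n = a • G 0 + ∑' n, b n • G (n + 1) :=
  (summable_smul_of_norm_eq_one hG (summable_natCons hb a)).tsum_eq_zero_add

lemma abs_head_le_tsum_abs_tail {u : ℕ → ℝ} (hu : Summable u) (hsum : ∑' n, u n = 0) :
    |u 0| ≤ ∑' n, |u (n + 1)| := by
  have hhead : u 0 = -∑' n, u (n + 1) := by
    rw [hu.tsum_eq_zero_add] at hsum
    linarith
  rw [hhead, abs_neg]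
  have htail : Summable fun n => u (n + 1) := (summable_nat_add_iff 1).2 hu
  exact norm_tsum_le_tsum_norm htail.norm

lemma add_le_two_div_mul {a b t : ℝ} (ht : 0 < t) (ht2 : t ≤ 2) (hab : a ≤ b) :
    a + b ≤ 2 / t * ((t - 1) * a + b) := by
  rw [div_mul_eq_mul_div, le_div_iff₀ ht]
  nlinarith

section DisjointSupports

variable {α : Type*} [MeasurableSpace α] {μ : Measure α}

lemma abs_finset_sum_mul_of_pairwise {u : ℕ → ℝ} (hu : Pairwise fun m n => u m = 0 ∨ u n = 0)
    (a : ℕ → ℝ) (s : Finset ℕ) :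
    |∑ n ∈ s, a n * u n| = ∑ n ∈ s, |a n| * |u n| := by
  induction s using Finset.induction with
  | empty => simp
  | @insert m s hm ih =>
    rw [Finset.sum_insert hm, Finset.sum_insert hm]
    by_cases hum : u m = 0
    · simp [hum, ih]
    · have hzero : ∀ n ∈ s, u n = 0 := fun n hn =>
        (hu (show m ≠ n by rintro rfl; exact hm hn)).resolve_left hum
      rw [Finset.sum_eq_zero fun n hn => by rw [hzero n hn, mul_zero],
        Finset.sum_eq_zero fun n hn => by rw [hzero n hn, abs_zero, mul_zero], add_zero, add_zero,
        abs_mul]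

lemma norm_finset_sum_smul_of_disjoint {G : ℕ → Lp ℝ 1 μ} (hG : ∀ n, ‖G n‖ = 1)
    (hdisj : Pairwise fun m n => ∀ᵐ x ∂μ, G m x = 0 ∨ G n x = 0) (a : ℕ → ℝ) (s : Finset ℕ) :
    ‖∑ n ∈ s, a n • G n‖ = ∑ n ∈ s, |a n| := by
  have hdisj_ae : ∀ᵐ x ∂μ, Pairwise fun m n => G m x = 0 ∨ G n x = 0 := by
    simp only [Pairwise, ae_all_iff]
    exact fun m n hmn => hdisj hmn
  have hsmul : ∀ᵐ x ∂μ, ∀ n, (a n • G n : Lp ℝ 1 μ) x = a n * G n x := by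
    rw [ae_all_iff]
    exact fun n => Lp.coeFn_smul (a n) (G n)
  rw [L1.norm_eq_integral_norm]
  calc ∫ x, ‖(∑ n ∈ s, a n • G n : Lp ℝ 1 μ) x‖ ∂μ
      = ∫ x, ∑ n ∈ s, |a n| * ‖G n x‖ ∂μ := by
        refine integral_congr_ae ?_
        filter_upwards [Lp.coeFn_fun_finsetSum s (fun n => a n • G n), hsmul, hdisj_ae]
          with x hsum hsmul hdisj
        rw [hsum]
        simpa only [hsmul, Real.norm_eq_abs] using abs_finset_sum_mul_of_pairwise hdisj a s
    _ = ∑ n ∈ s, |a n| := by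
        rw [integral_finsetSum _ fun n _ => (L1.integrable_coeFn (G n)).norm.const_mul _]
        refine Finset.sum_congr rfl fun n _ => ?_
        rw [integral_const_mul, ← L1.norm_eq_integral_norm, hG, mul_one]

lemma norm_tsum_smul_of_disjoint {G : ℕ → Lp ℝ 1 μ} (hG : ∀ n, ‖G n‖ = 1)
    (hdisj : Pairwise fun m n => ∀ᵐ x ∂μ, G m x = 0 ∨ G n x = 0) {a : ℕ → ℝ} (ha : Summable a) :
    ‖∑' n, a n • G n‖ = ∑' n, |a n| :=
  tendsto_nhds_unique
    ((summable_smul_of_norm_eq_one hG ha).hasSum.norm.congr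
      (norm_finset_sum_smul_of_disjoint hG hdisj a))
    ha.abs.hasSum

lemma norm_smul_sub_smul_of_disjoint {G : ℕ → Lp ℝ 1 μ} (hG : ∀ n, ‖G n‖ = 1)
    (hdisj : Pairwise fun m n => ∀ᵐ x ∂μ, G m x = 0 ∨ G n x = 0) {m n : ℕ} (hmn : m ≠ n)
    (a b : ℝ) : ‖a • G m - b • G n‖ = |a| + |b| := by
  have := norm_finset_sum_smul_of_disjoint hG hdisj (fun k => if k = m then a else -b) {m, n}
  simpa [Finset.sum_pair hmn, hmn.symm, sub_eq_add_neg] using this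

lemma norm_smul_add_tsum_smul_succ_of_disjoint {G : ℕ → Lp ℝ 1 μ} (hG : ∀ n, ‖G n‖ = 1)
    (hdisj : Pairwise fun m n => ∀ᵐ x ∂μ, G m x = 0 ∨ G n x = 0) {b : ℕ → ℝ} (hb : Summable b)
    (a : ℝ) : ‖a • G 0 + ∑' n, b n • G (n + 1)‖ = |a| + ∑' n, |b n| := by
  rw [← tsum_natCons_smul hG hb, norm_tsum_smul_of_disjoint hG hdisj (summable_natCons hb a),
    (summable_natCons hb a).abs.tsum_eq_zero_add]
  rfl

end DisjointSupports

section ShiftMap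

variable {g : ℕ → Lp ℝ 1 μ01} {t : ℝ}

variable (g t) in
noncomputable def ctPoint (s : ℕ → ℝ) : Lp ℝ 1 μ01 :=
  ((t - 1) * s 0) • g 0 + ∑' n : ℕ, s (n + 1) • g (n + 1)

lemma ctPoint_mem_Ct {s : ℕ → ℝ} (hs0 : ∀ n, 0 ≤ s n) (hs1 : ∑' n, s n = 1) :
    ctPoint g t s ∈ Ct g t :=
  ⟨s, hs0, hs1, rfl⟩

lemma ctPoint_sub (hg : ∀ n, ‖g n‖ = 1) {s r : ℕ → ℝ} (hs : Summable s) (hr : Summable r) :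
    ctPoint g t s - ctPoint g t r = ctPoint g t (s - r) := by
  have htail := tsum_smul_sub_tsum_smul (fun n => hg (n + 1)) ((summable_nat_add_iff 1).2 hs)
    ((summable_nat_add_iff 1).2 hr)
  rw [ctPoint, ctPoint, add_sub_add_comm, htail, ← sub_smul, ← mul_sub]
  rfl

lemma norm_ctPoint (hg : ∀ n, ‖g n‖ = 1)
    (hdisj : Pairwise fun m n => ∀ᵐ x ∂μ01, g m x = 0 ∨ g n x = 0) (ht : 1 ≤ t)
    {u : ℕ → ℝ} (hu : Summable u) : ‖ctPoint g t u‖ = (t - 1) * |u 0| + ∑' n, |u (n + 1)| := by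
  rw [ctPoint, norm_smul_add_tsum_smul_succ_of_disjoint hg hdisj
    ((summable_nat_add_iff 1).2 hu), abs_mul, abs_of_nonneg (sub_nonneg.2 ht)]

lemma ctPoint_natCons_zero (s : ℕ → ℝ) : ctPoint g t (natCons 0 s) = ∑' n, s n • g (n + 1) := by
  simp [ctPoint]

lemma iterate_succ_ctPoint (hg : ∀ n, ‖g n‖ = 1) {T : Lp ℝ 1 μ01 → Lp ℝ 1 μ01}
    (hT : ∀ s : ℕ → ℝ, (∀ n, 0 ≤ s n) → ∑' n, s n = 1 → T (ctPoint g t s) = ∑' n, s n • g (n + 1))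
    (k : ℕ) {s : ℕ → ℝ} (hs0 : ∀ n, 0 ≤ s n) (hs1 : ∑' n, s n = 1) :
    T^[k + 1] (ctPoint g t s) = ∑' n, s n • g (n + (k + 1)) := by
  induction k generalizing s with
  | zero => exact hT s hs0 hs1
  | succ k ih =>
    have hs : Summable s := summable_of_tsum_ne_zero (hs1 ▸ one_ne_zero)
    have hs0' : ∀ n, 0 ≤ natCons 0 s n := fun n => n.casesOn le_rfl hs0
    have hs1' : ∑' n, natCons 0 s n = 1 := by rw [tsum_natCons hs, zero_add, hs1]
    rw [Function.iterate_succ_apply, hT s hs0 hs1, ← ctPoint_natCons_zero, ih hs0' hs1',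
      tsum_natCons_smul (fun n => hg _) hs, zero_smul, zero_add]
    exact tsum_congr fun n => by rw [add_right_comm, add_assoc]

lemma iterate_succ_ctPoint_ite (hg : ∀ n, ‖g n‖ = 1) {T : Lp ℝ 1 μ01 → Lp ℝ 1 μ01}
    (hT : ∀ s : ℕ → ℝ, (∀ n, 0 ≤ s n) → ∑' n, s n = 1 → T (ctPoint g t s) = ∑' n, s n • g (n + 1))
    (k i : ℕ) : T^[k + 1] (ctPoint g t fun n => if n = i then 1 else 0) = g (i + (k + 1)) := by
  rw [iterate_succ_ctPoint hg hT k (fun n => by positivity) (by simp)]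
  simp [ite_smul]

lemma norm_iterate_sub_le (hg : ∀ n, ‖g n‖ = 1)
    (hdisj : Pairwise fun m n => ∀ᵐ x ∂μ01, g m x = 0 ∨ g n x = 0) (ht1 : 1 ≤ t) (ht2 : t ≤ 2)
    {T : Lp ℝ 1 μ01 → Lp ℝ 1 μ01}
    (hT : ∀ s : ℕ → ℝ, (∀ n, 0 ≤ s n) → ∑' n, s n = 1 → T (ctPoint g t s) = ∑' n, s n • g (n + 1))
    (n : ℕ) {f h : Lp ℝ 1 μ01} (hf : f ∈ Ct g t) (hh : h ∈ Ct g t) :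
    ‖T^[n] f - T^[n] h‖ ≤ 2 / t * ‖f - h‖ := by
  cases n with
  | zero =>
    exact le_mul_of_one_le_left (norm_nonneg _) ((one_le_div₀ (by linarith)).2 ht2)
  | succ k =>
    obtain ⟨s, hs0, hs1, rfl⟩ := hf
    obtain ⟨r, hr0, hr1, rfl⟩ := hh
    have hs : Summable s := summable_of_tsum_ne_zero (hs1 ▸ one_ne_zero)
    have hr : Summable r := summable_of_tsum_ne_zero (hr1 ▸ one_ne_zero)
    have hdisj' : Pairwise fun m n => ∀ᵐ x ∂μ01, g (m + (k + 1)) x = 0 ∨ g (n + (k + 1)) x = 0 :=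
      hdisj.comp_of_injective (add_left_injective _)
    have hsr : Summable (s - r) := hs.sub hr
    have hhead := abs_head_le_tsum_abs_tail hsr
      (by simp only [Pi.sub_apply]; rw [hs.tsum_sub hr, hs1, hr1, sub_self])
    change ‖T^[k + 1] (ctPoint g t s) - T^[k + 1] (ctPoint g t r)‖ ≤
      2 / t * ‖ctPoint g t s - ctPoint g t r‖
    rw [iterate_succ_ctPoint hg hT k hs0 hs1, iterate_succ_ctPoint hg hT k hr0 hr1,
      tsum_smul_sub_tsum_smul (fun n => hg _) hs hr,
      norm_tsum_smul_of_disjoint (fun n => hg _) hdisj' hsr,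
      hsr.abs.tsum_eq_zero_add, ctPoint_sub hg hs hr, norm_ctPoint hg hdisj ht1 hsr]
    exact add_le_two_div_mul (by linarith) ht2 hhead

end ShiftMap

lemma exactLip_eq_of_forall_le_of_eq {g : ℕ → Lp ℝ 1 μ01} {t : ℝ} {T : Lp ℝ 1 μ01 → Lp ℝ 1 μ01}
    {k : ℕ} {c : ℝ} (hle : ∀ f ∈ Ct g t, ∀ h ∈ Ct g t, ‖T^[k] f - T^[k] h‖ ≤ c * ‖f - h‖)
    {f₀ h₀ : Lp ℝ 1 μ01} (hf₀ : f₀ ∈ Ct g t) (hh₀ : h₀ ∈ Ct g t) (hne : f₀ ≠ h₀)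
    (heq : ‖T^[k] f₀ - T^[k] h₀‖ = c * ‖f₀ - h₀‖) : exactLip g t T k = c := by
  refine IsGreatest.csSup_eq ⟨⟨f₀, hf₀, h₀, hh₀, hne, ?_⟩, ?_⟩
  · rw [heq, mul_div_cancel_right₀ _ (norm_ne_zero_iff.2 (sub_ne_zero.2 hne))]
  · rintro q ⟨f, hf, h, hh, hfh, rfl⟩
    exact (div_le_iff₀ (norm_pos_iff.2 (sub_ne_zero.2 hfh))).2 (hle f hf h hh)

lemma liminf_sum_Icc_div_eq_of_eq {a : ℕ → ℝ} {c : ℝ} (h : ∀ k, 1 ≤ k → a k = c) :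
    liminf (fun n : ℕ => (∑ k ∈ Finset.Icc 1 n, a k) / n) atTop = c := by
  refine (liminf_congr ?_).trans (liminf_const c)
  filter_upwards [eventually_ge_atTop 1] with n hn
  rw [Finset.sum_congr rfl fun k hk => h k (Finset.mem_Icc.1 hk).1, Finset.sum_const,
    Nat.card_Icc, Nat.add_sub_cancel, nsmul_eq_mul]
  field_simp

/-- The shift map on `C_t` is uniformly `2/t`-Lipschitzian; the constant `2/t` is attained at
`f = (t-1)g₁`, `g = g₂` (with `‖f - g‖ = t` and `‖Tⁿf - Tⁿg‖ = 2 = (2/t)·‖f - g‖`), and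
`S(T) = liminf (|T| + ⋯ + |Tⁿ|)/n = 2/t`. -/
theorem shift_map_uniform_lipschitz_constant
    (g : ℕ → Lp ℝ 1 μ01) (hnorm : ∀ n, ‖g n‖ = 1)
    (hdisj : ∀ m n : ℕ, m ≠ n → ∀ᵐ x ∂μ01, (g m : ℝ → ℝ) x = 0 ∨ (g n : ℝ → ℝ) x = 0)
    (t : ℝ) (ht : t ∈ Set.Ioo (1 : ℝ) 2)
    (T : Lp ℝ 1 μ01 → Lp ℝ 1 μ01)
    (hT : ∀ s : ℕ → ℝ, (∀ n, 0 ≤ s n) → (∑' n, s n) = 1 →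
      T (((t - 1) * s 0) • g 0 + ∑' n : ℕ, s (n + 1) • g (n + 1)) =
        ∑' n : ℕ, s n • g (n + 1)) :
    (∀ n : ℕ, ∀ f ∈ Ct g t, ∀ h ∈ Ct g t,
      ‖T^[n] f - T^[n] h‖ ≤ (2 / t) * ‖f - h‖) ∧
    (t - 1) • g 0 ∈ Ct g t ∧ g 1 ∈ Ct g t ∧
    ‖(t - 1) • g 0 - g 1‖ = t ∧
    (∀ n : ℕ, 1 ≤ n →
      ‖T^[n] ((t - 1) • g 0) - T^[n] (g 1)‖ = 2 ∧
      (2 : ℝ) = (2 / t) * ‖(t - 1) • g 0 - g 1‖) ∧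
    liminf (fun n : ℕ => (∑ k ∈ Finset.Icc 1 n, exactLip g t T k) / n) atTop = 2 / t := by
  have hlip : ∀ n, ∀ f ∈ Ct g t, ∀ h ∈ Ct g t, ‖T^[n] f - T^[n] h‖ ≤ 2 / t * ‖f - h‖ :=
    fun n f hf h hh => norm_iterate_sub_le hnorm hdisj ht.1.le ht.2.le hT n hf hh
  have hpoint₀ : ctPoint g t (fun n => if n = 0 then 1 else 0) = (t - 1) • g 0 := by simp [ctPoint]
  have hpoint₁ : ctPoint g t (fun n => if n = 1 then 1 else 0) = g 1 := by simp [ctPoint]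
  have hmem : ∀ i, ctPoint g t (fun n => if n = i then 1 else 0) ∈ Ct g t :=
    fun i => ctPoint_mem_Ct (fun n => by positivity) (by simp)
  have hmem₀ : (t - 1) • g 0 ∈ Ct g t := hpoint₀ ▸ hmem 0
  have hmem₁ : g 1 ∈ Ct g t := hpoint₁ ▸ hmem 1
  have hdist : ‖(t - 1) • g 0 - g 1‖ = t := by
    rw [← one_smul ℝ (g 1), norm_smul_sub_smul_of_disjoint hnorm hdisj zero_ne_one,
      abs_of_pos (sub_pos.2 ht.1), abs_one, sub_add_cancel]
  have hdist_iter : ∀ n, 1 ≤ n → ‖T^[n] ((t - 1) • g 0) - T^[n] (g 1)‖ = 2 := by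
    intro n hn
    obtain ⟨k, rfl⟩ := Nat.exists_eq_add_of_le' hn
    rw [← hpoint₀, ← hpoint₁, iterate_succ_ctPoint_ite hnorm hT, iterate_succ_ctPoint_ite hnorm hT,
      ← one_smul ℝ (g _), ← one_smul ℝ (g (1 + _)),
      norm_smul_sub_smul_of_disjoint hnorm hdisj (by omega)]
    norm_num
  have hratio : (2 : ℝ) = 2 / t * ‖(t - 1) • g 0 - g 1‖ := by
    rw [hdist, div_mul_cancel₀ _ (by linarith [ht.1])]
  have hne : (t - 1) • g 0 ≠ g 1 := fun h => by
    rw [h, sub_self, norm_zero] at hdist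
    linarith [ht.1]
  refine ⟨hlip, hmem₀, hmem₁, hdist, fun n hn => ⟨hdist_iter n hn, hratio⟩,
    liminf_sum_Icc_div_eq_of_eq fun k hk => ?_⟩
  exact exactLip_eq_of_forall_le_of_eq (hlip k) hmem₀ hmem₁ hne
    (by rw [hdist_iter k hk, ← hratio])
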